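/- arXiv:1707.01334 — 3 statements merged into one kernel-verified Lean document; each statement's English description precedes it below -/
import Mathlib

section
/- For the model Y = X₁ + X₂X₃ with Corr(X₁,X₃) = ρ and σ₁ = σ₂ = σ₃ = 1: Sh₃ ≥ max(S₃, S_{T₃}) if and only if 3/7 ≤ ρ² ≤ 3/5, where σ²S₃ = ρ², σ²S_{T₃} = 1-ρ², σ²Sh₃ = ρ²/2 + (3-2ρ²)/6, σ² = 2. -/
/-- For the model `Y = X₁ + X₂X₃` with `Corr(X₁,X₃) = ρ` and
`σ₁ = σ₂ = σ₃ = 1`: `Sh₃ ≥ max(S₃, S_{T₃})` if and only if `3/7 ≤ ρ² ≤ 3/5`, where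
`σ²S₃ = ρ²`, `σ²S_{T₃} = 1 - ρ²`, `σ²Sh₃ = ρ²/2 + (3 - 2ρ²)/6`, `σ² = 2`. -/
theorem shapley_exceeds_both_sobol_iff
    (ρ σ2 S3 ST3 Sh3 : ℝ)
    (hρl : -1 ≤ ρ) (hρu : ρ ≤ 1)
    (hσ2 : σ2 = 2)
    (hS3 : σ2 * S3 = ρ ^ 2)
    (hST3 : σ2 * ST3 = 1 - ρ ^ 2)
    (hSh3 : σ2 * Sh3 = ρ ^ 2 / 2 + (3 - 2 * ρ ^ 2) / 6) :
    Sh3 ≥ max S3 ST3 ↔ (3 / 7 ≤ ρ ^ 2 ∧ ρ ^ 2 ≤ 3 / 5) := by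
  subst hσ2
  have h1 : S3 = ρ ^ 2 / 2 := by linarith
  have h2 : ST3 = (1 - ρ ^ 2) / 2 := by linarith
  have h3 : Sh3 = (ρ ^ 2 / 2 + (3 - 2 * ρ ^ 2) / 6) / 2 := by linarith
  subst h1 h2 h3
  rw [ge_iff_le, max_le_iff]
  constructor
  · rintro ⟨a, b⟩; constructor <;> nlinarith
  · rintro ⟨a, b⟩; constructor <;> nlinarith
end

section
/- For a block-additive model Y = g(X₁,X₂) + h(X₃) with X₃ independent of (X₁,X₂), for j ∈ {1,2} the following are equivalent: (i) S_j ≤ Sh_j; (ii) Sh_j ≤ S_{T_j}; (iii) τ²₁ + τ²₂ ≤ τ²₁₂. -/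
/-- For a block-additive model `Y = g(X₁,X₂) + h(X₃)` with `X₃` independent
of `(X₁,X₂)`, for `j ∈ {1,2}` the following are equivalent: (i) `S_j ≤ Sh_j`;
(ii) `Sh_j ≤ S_{T_j}`; (iii) `τ²₁ + τ²₂ ≤ τ²₁₂`. Here, e.g. for `j = 1`, `S₁ = τ²₁/σ²`,
`S_{T₁} = (σ² - τ²₂₃)/σ²` and
`σ²Sh₁ = (1/3)[τ²₁ + (1/2)(τ²₁₂ - τ²₂ + τ²₁₃ - τ²₃) + σ² - τ²₂₃]`,
with the block-additive identities and `0 ≤ τ²₁, τ²₂ ≤ τ²₁₂`, `0 ≤ τ²₃`. -/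
theorem block_additive_equivalences
    (τ1 τ2 τ3 τ12 τ13 τ23 σ2 S1 S2 ST1 ST2 Sh1 Sh2 : ℝ)
    (hσ2pos : 0 < σ2)
    (hτ1nn : 0 ≤ τ1) (hτ2nn : 0 ≤ τ2) (hτ3nn : 0 ≤ τ3)
    (hτ1le : τ1 ≤ τ12) (hτ2le : τ2 ≤ τ12)
    (hadd : σ2 = τ12 + τ3)
    (h13 : τ13 = τ1 + τ3)
    (h23 : τ23 = τ2 + τ3)
    (hS1 : S1 = τ1 / σ2) (hS2 : S2 = τ2 / σ2)
    (hST1 : ST1 = (σ2 - τ23) / σ2) (hST2 : ST2 = (σ2 - τ13) / σ2)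
    (hSh1 : σ2 * Sh1 = (1 / 3) * (τ1 + (1 / 2) * ((τ12 - τ2) + (τ13 - τ3))
      + (σ2 - τ23)))
    (hSh2 : σ2 * Sh2 = (1 / 3) * (τ2 + (1 / 2) * ((τ12 - τ1) + (τ23 - τ3))
      + (σ2 - τ13))) :
    ((S1 ≤ Sh1 ↔ τ1 + τ2 ≤ τ12) ∧ (Sh1 ≤ ST1 ↔ τ1 + τ2 ≤ τ12)) ∧
    ((S2 ≤ Sh2 ↔ τ1 + τ2 ≤ τ12) ∧ (Sh2 ≤ ST2 ↔ τ1 + τ2 ≤ τ12)) := by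
  have hSh1' : σ2 * Sh1 = (τ1 + τ12 - τ2) / 2 := by
    rw [hSh1]; subst hadd h13 h23; ring
  have hSh2' : σ2 * Sh2 = (τ2 + τ12 - τ1) / 2 := by
    rw [hSh2]; subst hadd h13 h23; ring
  refine ⟨⟨?_, ?_⟩, ?_, ?_⟩
  · rw [hS1, div_le_iff₀ hσ2pos]
    constructor <;> intro h <;> nlinarith
  · rw [hST1, le_div_iff₀ hσ2pos]
    constructor <;> intro h <;> nlinarith
  · rw [hS2, div_le_iff₀ hσ2pos]
    constructor <;> intro h <;> nlinarith
  · rw [hST2, le_div_iff₀ hσ2pos]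
    constructor <;> intro h <;> nlinarith
end

section
/- In a d-input model with independent inputs, the Shapley effects are bounded between the corresponding first-order and total Sobol' indices: S_i ≤ Sh_i ≤ S_{T_i} for every i. -/
open Finset

/-- The Shapley weights sum to 1. -/
lemma shapley_weight_sum (d : ℕ) (hd : 0 < d) (i : Fin d) :
    ∑ u ∈ (univ.erase i).powerset,
      (((d - u.card - 1).factorial * u.card.factorial : ℝ) / d.factorial) = 1 := by
  have hcard : (univ.erase i).card = d - 1 := by
    rw [card_erase_of_mem (mem_univ i), card_univ, Fintype.card_fin]
  rw [Finset.sum_powerset_apply_card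
      (fun k => (((d - k - 1).factorial * k.factorial : ℝ) / d.factorial)), hcard]
  have hd1 : d - 1 + 1 = d := Nat.succ_pred_eq_of_pos hd
  rw [hd1]
  have hterm : ∀ m ∈ range d,
      (d - 1).choose m • ((((d - m - 1).factorial * m.factorial : ℝ) / d.factorial))
        = (1 : ℝ) / d := by
    intro m hm
    rw [mem_range] at hm
    have hmle : m ≤ d - 1 := Nat.le_pred_of_lt hm
    have hds : d - m - 1 = d - 1 - m := by omega
    have hkey : ((d - 1).choose m) * m.factorial * (d - 1 - m).factorial
        = (d - 1).factorial := Nat.choose_mul_factorial_mul_factorial hmle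
    have hdfac : d.factorial = d * (d - 1).factorial := by
      conv_lhs => rw [← hd1]
      rw [Nat.factorial_succ, hd1]
    rw [nsmul_eq_mul, hds]
    have hdne : (d:ℝ) ≠ 0 := by positivity
    have hfne : (d.factorial:ℝ) ≠ 0 := by positivity
    field_simp
    rw [hdfac]
    push_cast [← hkey]
    ring
  rw [Finset.sum_congr rfl hterm, sum_const, card_range, nsmul_eq_mul,
    mul_one_div, div_self (by positivity)]

/-- In a `d`-input model with independent inputs, the Shapley effects are
bounded between the corresponding first-order and total Sobol' indices:
`S_i ≤ Sh_i ≤ S_{T_i}` for every `i`. Under independence, the Hoeffding–Sobol'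
decomposition gives nonnegative indices `S v` with `S ∅ = 0`, closed indices
`S^clo_u = Σ_{v ⊆ u} S_v`, first-order index `S_i = S_{{i}}`, total index
`S_{T_i} = Σ_{v ∋ i} S_v`, and Shapley effect
`Sh_i = Σ_{u ⊆ -{i}} ((d-|u|-1)!|u|!/d!)[S^clo_{u∪{i}} - S^clo_u]`. -/
theorem shapley_between_sobol_independent_inputs
    (d : ℕ) (hd : 0 < d)
    (S : Finset (Fin d) → ℝ)
    (hS0 : S ∅ = 0) (hSnn : ∀ v, 0 ≤ S v)
    (Sclo : Finset (Fin d) → ℝ)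
    (hSclo : ∀ u, Sclo u = ∑ v ∈ u.powerset, S v)
    (Sh : Fin d → ℝ)
    (hSh : ∀ i, Sh i = ∑ u ∈ (univ.erase i).powerset,
      (((d - u.card - 1).factorial * u.card.factorial : ℝ) / d.factorial) *
        (Sclo (insert i u) - Sclo u)) :
    ∀ i : Fin d, S {i} ≤ Sh i ∧ Sh i ≤ ∑ v ∈ univ.powerset.filter (fun v => i ∈ v), S v := by
  intro i
  set w : Finset (Fin d) → ℝ :=
    fun u => (((d - u.card - 1).factorial * u.card.factorial : ℝ) / d.factorial) with hw
  have hwnn : ∀ u, 0 ≤ w u := fun u => by positivity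
  have hwsum : ∑ u ∈ (univ.erase i).powerset, w u = 1 := shapley_weight_sum d hd i
  -- the closed-index difference formula
  have hdiff : ∀ u : Finset (Fin d), i ∉ u →
      Sclo (insert i u) - Sclo u = ∑ v ∈ u.powerset, S (insert i v) := by
    intro u hiu
    have hdisj : Disjoint u.powerset (u.powerset.image (insert i)) := by
      rw [disjoint_right]
      intro v hv hv'
      obtain ⟨x, hx, rfl⟩ := mem_image.1 hv
      exact hiu (mem_powerset.1 hv' (mem_insert_self i x))
    have hinj : ∀ x ∈ u.powerset, ∀ y ∈ u.powerset,
        insert i x = insert i y → x = y := by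
      intro x hx y hy hxy
      have hix : i ∉ x := fun h => hiu (mem_powerset.1 hx h)
      have hiy : i ∉ y := fun h => hiu (mem_powerset.1 hy h)
      have := congrArg (fun s => Finset.erase s i) hxy
      simpa [Finset.erase_insert hix, Finset.erase_insert hiy] using this
    rw [hSclo, hSclo, powerset_insert, sum_union hdisj, sum_image hinj]
    ring
  have hShw : Sh i = ∑ u ∈ (univ.erase i).powerset,
      w u * ∑ v ∈ u.powerset, S (insert i v) := by
    rw [hSh]
    refine sum_congr rfl fun u hu => ?_
    have hiu : i ∉ u := fun h => (mem_erase.1 (mem_powerset.1 hu h)).1 rfl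
    rw [hdiff u hiu]
  -- the total index as a sum over subsets of univ.erase i
  have htot : ∑ v ∈ univ.powerset.filter (fun v => i ∈ v), S v
      = ∑ v ∈ (univ.erase i).powerset, S (insert i v) := by
    have himg : univ.powerset.filter (fun v => i ∈ v)
        = (univ.erase i).powerset.image (insert i) := by
      ext v
      simp only [mem_filter, mem_powerset, mem_image]
      constructor
      · rintro ⟨-, hiv⟩
        refine ⟨v.erase i, ?_, ?_⟩
        · exact erase_subset_erase i (subset_univ v)
        · exact insert_erase hiv
      · rintro ⟨x, -, rfl⟩
        exact ⟨subset_univ _, mem_insert_self i x⟩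
    rw [himg]
    refine sum_image ?_
    intro x hx y hy hxy
    have hix : i ∉ x := fun h => (mem_erase.1 (mem_powerset.1 hx h)).1 rfl
    have hiy : i ∉ y := fun h => (mem_erase.1 (mem_powerset.1 hy h)).1 rfl
    have := congrArg (fun s => Finset.erase s i) hxy
    simpa [Finset.erase_insert hix, Finset.erase_insert hiy] using this
  constructor
  · -- lower bound
    calc S {i} = ∑ u ∈ (univ.erase i).powerset, w u * S {i} := by
          rw [← sum_mul, hwsum, one_mul]
      _ ≤ Sh i := by
          rw [hShw]
          refine sum_le_sum fun u hu => ?_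
          refine mul_le_mul_of_nonneg_left ?_ (hwnn u)
          have h0 : (∅ : Finset (Fin d)) ∈ u.powerset := mem_powerset.2 (empty_subset u)
          have := single_le_sum (f := fun v => S (insert i v))
            (fun v _ => hSnn _) h0
          simpa using this
  · -- upper bound
    rw [hShw, htot]
    calc ∑ u ∈ (univ.erase i).powerset, w u * ∑ v ∈ u.powerset, S (insert i v)
        ≤ ∑ u ∈ (univ.erase i).powerset,
            w u * ∑ v ∈ (univ.erase i).powerset, S (insert i v) := by
          refine sum_le_sum fun u hu => ?_
          refine mul_le_mul_of_nonneg_left ?_ (hwnn u)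
          exact sum_le_sum_of_subset_of_nonneg
            (powerset_mono.2 (mem_powerset.1 hu)) (fun v _ _ => hSnn _)
      _ = ∑ v ∈ (univ.erase i).powerset, S (insert i v) := by
          rw [← sum_mul, hwsum, one_mul]
end
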